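/- arXiv:1712.03494 — 2 statements merged into one kernel-verified Lean document; each statement's English description precedes it below -/
import Mathlib

section
/- Let $v_1,\dots,v_k \in \mathbb{R}^{2n}$ and let $z \in W^{1,2}([0,1],\mathbb{R}^{2n})$ satisfy $\dot z(t) \in \mathrm{conv}\{v_1,\dots,v_k\}$ for almost every $t$. Then for every $\varepsilon > 0$ there exists a piecewise affine function $\zeta:[0,1]\to\mathbb{R}^{2n}$ with $\|z-\zeta\|_{1,2} < \varepsilon$, $\zeta(0)=z(0)$, $\zeta(1)=z(1)$, and $\dot\zeta(t) \in \mathrm{conv}\{v_1,\dots,v_k\}$ for almost every $t$. -/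
open MeasureTheory Set
open scoped RealInnerProductSpace BigOperators

noncomputable def stdJ {n : ℕ} (x : EuclideanSpace ℝ (Fin (2*n))) : EuclideanSpace ℝ (Fin (2*n)) :=
  WithLp.toLp 2 (fun i : Fin (2*n) => if h : (i : ℕ) < n then -x ⟨(i:ℕ) + n, by omega⟩ else x ⟨(i:ℕ) - n, by omega⟩)

/-- The standard symplectic form `ω(u,v) = ⟨Ju, v⟩` on `ℝ^{2n}`. -/
noncomputable def omegaF {n : ℕ} (u v : EuclideanSpace ℝ (Fin (2*n))) : ℝ :=
  ⟪stdJ u, v⟫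

/-!
Replace `ż` by its averages `ζ̇` over the blocks `[i/m, (i+1)/m]` of a uniform partition and
let `ζ` be the primitive of `ζ̇` starting at `z(0)`. Averages of a function with values in the
closed convex set `conv{v_i}` stay in it, and averaging preserves the integral over `[0,1]`, so
`ζ(1) = z(1)`. Averaging is an `L¹` contraction and moves a uniformly continuous function
uniformly little, so density of continuous functions in `L¹` gives `‖ż - ζ̇‖_{L¹} → 0` as
`m → ∞`. This controls `‖z - ζ‖_∞ ≤ ‖ż - ζ̇‖_{L¹}`, and since `ż` and `ζ̇` take values in the
hull, which lies in a ball of radius `M`, also `‖ż - ζ̇‖_{L²}² ≤ 2M ‖ż - ζ̇‖_{L¹}`.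
-/

-- The index is clamped so that `t = 1` falls in the last block `[(m-1)/m, 1]`.
noncomputable def uniformIndex (m : ℕ) (t : ℝ) : ℕ := min ⌊t * m⌋₊ (m - 1)

lemma uniformIndex_lt {m : ℕ} (hm : 0 < m) (t : ℝ) : uniformIndex m t < m := by
  unfold uniformIndex; omega

lemma uniformIndex_eq_of_mem_Ioo {m i : ℕ} (hi : i < m) {t : ℝ}
    (ht : t ∈ Ioo ((i : ℝ) / m) ((i + 1) / m)) : uniformIndex m t = i := by
  have hm : (0 : ℝ) < m := by exact_mod_cast i.zero_le.trans_lt hi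
  obtain ⟨h1, h2⟩ := ht
  rw [div_lt_iff₀ hm] at h1
  rw [lt_div_iff₀ hm] at h2
  have hfloor : ⌊t * m⌋₊ = i :=
    (Nat.floor_eq_iff (by linarith [(i.cast_nonneg : (0 : ℝ) ≤ i)])).2 ⟨h1.le, h2⟩
  rw [uniformIndex, hfloor]
  omega

lemma mem_Icc_uniformIndex {m : ℕ} (hm : 0 < m) {t : ℝ} (ht : t ∈ Icc (0 : ℝ) 1) :
    t ∈ Icc ((uniformIndex m t : ℝ) / m) ((uniformIndex m t + 1) / m) := by
  have hm' : (0 : ℝ) < m := by exact_mod_cast hm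
  have htm : 0 ≤ t * m := mul_nonneg ht.1 hm'.le
  rw [mem_Icc, div_le_iff₀ hm', le_div_iff₀ hm', uniformIndex]
  constructor
  · exact (Nat.cast_le.2 (min_le_left _ _)).trans (Nat.floor_le htm)
  · rcases le_total ⌊t * m⌋₊ (m - 1) with h | h
    · rw [min_eq_left h]
      exact (Nat.lt_floor_add_one _).le
    · rw [min_eq_right h, Nat.cast_sub hm]
      push_cast
      nlinarith [ht.2]

variable {E : Type*} [NormedAddCommGroup E]

lemma MeasureTheory.IntegrableOn.intervalIntegrable_of_Icc {f : ℝ → E} {a b : ℝ} (hab : a ≤ b)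
    (hf : IntegrableOn f (Icc a b)) : IntervalIntegrable f volume a b :=
  (intervalIntegrable_iff_integrableOn_Icc_of_le hab).2 hf

lemma block_le (m i : ℕ) : (i : ℝ) / m ≤ (i + 1) / m :=
  div_le_div_of_nonneg_right (by linarith) m.cast_nonneg

lemma Icc_block_subset_Icc {m i : ℕ} (hi : i < m) :
    Icc ((i : ℝ) / m) ((i + 1) / m) ⊆ Icc 0 1 := by
  have hm : (0 : ℝ) < m := by exact_mod_cast i.zero_le.trans_lt hi
  refine Icc_subset_Icc (by positivity) ((div_le_one hm).2 ?_)
  exact_mod_cast hi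

lemma intervalIntegrable_block {f : ℝ → E} (hf : IntegrableOn f (Icc 0 1))
    {m i : ℕ} (hi : i < m) : IntervalIntegrable f volume ((i : ℝ) / m) ((i + 1) / m) :=
  (hf.mono_set (Icc_block_subset_Icc hi)).intervalIntegrable_of_Icc (block_le m i)

lemma intervalIntegral_norm_sub_le {f g h : ℝ → E} {a b : ℝ} (hab : a ≤ b)
    (hf : IntervalIntegrable f volume a b) (hg : IntervalIntegrable g volume a b)
    (hh : IntervalIntegrable h volume a b) :
    ∫ t in a..b, ‖f t - h t‖ ≤ (∫ t in a..b, ‖f t - g t‖) + ∫ t in a..b, ‖g t - h t‖ := by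
  rw [← intervalIntegral.integral_add (hf.sub hg).norm (hg.sub hh).norm]
  exact intervalIntegral.integral_mono_on hab (hf.sub hh).norm
    ((hf.sub hg).norm.add (hg.sub hh).norm) fun t _ => norm_sub_le_norm_sub_add_norm_sub _ _ _

variable [NormedSpace ℝ E]

noncomputable def blockAverage (f : ℝ → E) (m i : ℕ) : E :=
  ⨍ s in (i / m : ℝ)..((i + 1) / m), f s

noncomputable def blockApprox (f : ℝ → E) (m : ℕ) (t : ℝ) : E :=
  blockAverage f m (uniformIndex m t)

lemma integral_block_eq_smul_blockAverage (f : ℝ → E) {m : ℕ} (hm : 0 < m) (i : ℕ) :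
    ∫ s in (i / m : ℝ)..((i + 1) / m), f s = (1 / m : ℝ) • blockAverage f m i := by
  have hm' : (m : ℝ) ≠ 0 := by exact_mod_cast hm.ne'
  rw [blockAverage, interval_average_eq, smul_smul, show ((i + 1) / m - i / m : ℝ) = 1 / m by ring,
    mul_inv_cancel₀ (by positivity), one_smul]

lemma blockAverage_mem [CompleteSpace E] {f : ℝ → E} {C : Set E} (hC : Convex ℝ C)
    (hCc : IsClosed C) {m : ℕ} (hm : 0 < m) {i : ℕ}
    (hf : IntegrableOn f (Ioc ((i : ℝ) / m) ((i + 1) / m)))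
    (hfC : ∀ᵐ s ∂volume.restrict (Ioc ((i : ℝ) / m) ((i + 1) / m)), f s ∈ C) :
    blockAverage f m i ∈ C := by
  rw [blockAverage, uIoc_of_le (block_le m i)]
  refine hC.set_average_mem hCc ?_ (by simp) hfC hf
  rw [Real.volume_Ioc, show ((i + 1) / m - i / m : ℝ) = 1 / m by ring]
  simpa using hm.ne'

lemma blockAverage_mem_of_ae_mem [CompleteSpace E] {f : ℝ → E} {C : Set E} (hC : Convex ℝ C)
    (hCc : IsClosed C) (hf : IntegrableOn f (Icc 0 1))
    (hfC : ∀ᵐ s ∂volume.restrict (Icc (0 : ℝ) 1), f s ∈ C) {m i : ℕ} (hi : i < m) :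
    blockAverage f m i ∈ C := by
  have hsub : Ioc ((i : ℝ) / m) ((i + 1) / m) ⊆ Icc 0 1 :=
    Ioc_subset_Icc_self.trans (Icc_block_subset_Icc hi)
  exact blockAverage_mem hC hCc (i.zero_le.trans_lt hi) (hf.mono_set hsub)
    (ae_restrict_of_ae_restrict_of_subset hsub hfC)

lemma integrableOn_blockApprox (f : ℝ → E) (m : ℕ) : IntegrableOn (blockApprox f m) (Icc 0 1) := by
  have hidx : Measurable (uniformIndex m) :=
    (Nat.measurable_floor.comp (measurable_id.mul_const _)).min measurable_const
  have hbound : ∀ t, ‖blockApprox f m t‖ ≤ ∑ i ∈ Finset.range (m + 1), ‖blockAverage f m i‖ :=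
    fun t => Finset.single_le_sum (f := fun i => ‖blockAverage f m i‖) (fun _ _ => norm_nonneg _)
      (Finset.mem_range.2 (by unfold uniformIndex; omega))
  exact Integrable.mono' (integrableOn_const (by simp))
    ((StronglyMeasurable.of_discrete.comp_measurable hidx).aestronglyMeasurable)
    (ae_of_all _ hbound)

lemma blockApprox_eq_of_mem_Ioo (f : ℝ → E) {m i : ℕ} (hi : i < m) {t : ℝ}
    (ht : t ∈ Ioo ((i : ℝ) / m) ((i + 1) / m)) : blockApprox f m t = blockAverage f m i := by
  rw [blockApprox, uniformIndex_eq_of_mem_Ioo hi ht]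

lemma integral_block_blockApprox [CompleteSpace E] (f : ℝ → E) {m i : ℕ} (hi : i < m) :
    ∫ s in (i / m : ℝ)..((i + 1) / m), blockApprox f m s
      = ∫ s in (i / m : ℝ)..((i + 1) / m), f s := by
  rw [integral_block_eq_smul_blockAverage f (i.zero_le.trans_lt hi),
    intervalIntegral.integral_of_le (block_le m i), integral_Ioc_eq_integral_Ioo,
    setIntegral_congr_fun measurableSet_Ioo fun s => blockApprox_eq_of_mem_Ioo f hi,
    setIntegral_const, Real.volume_real_Ioo_of_le (block_le m i)]
  ring_nf

lemma integral_eq_sum_blocks {f : ℝ → E} (hf : IntegrableOn f (Icc 0 1)) {m : ℕ} (hm : 0 < m) :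
    ∫ t in (0 : ℝ)..1, f t = ∑ i ∈ Finset.range m, ∫ s in (i / m : ℝ)..((i + 1) / m), f s := by
  have hsum := intervalIntegral.sum_integral_adjacent_intervals (a := fun i : ℕ => (i / m : ℝ))
    (fun k hk => by simpa using intervalIntegrable_block hf hk)
  simp only [Nat.cast_zero, zero_div, Nat.cast_add, Nat.cast_one,
    div_self (Nat.cast_ne_zero.2 hm.ne' : (m : ℝ) ≠ 0)] at hsum
  exact hsum.symm

lemma integral_blockApprox [CompleteSpace E] {f : ℝ → E} (hf : IntegrableOn f (Icc 0 1)) {m : ℕ}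
    (hm : 0 < m) :
    ∫ t in (0 : ℝ)..1, blockApprox f m t = ∫ t in (0 : ℝ)..1, f t := by
  rw [integral_eq_sum_blocks (integrableOn_blockApprox f m) hm, integral_eq_sum_blocks hf hm]
  exact Finset.sum_congr rfl fun i hi => integral_block_blockApprox f (Finset.mem_range.1 hi)

lemma norm_blockApprox_le (f : ℝ → E) (m : ℕ) (t : ℝ) :
    ‖blockApprox f m t‖ ≤ blockApprox (fun s => ‖f s‖) m t := by
  have hlen := inv_nonneg.2 (sub_nonneg.2 (block_le m (uniformIndex m t)))
  simp only [blockApprox, blockAverage, interval_average_eq, norm_smul, smul_eq_mul,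
    Real.norm_of_nonneg hlen]
  exact mul_le_mul_of_nonneg_left
    (intervalIntegral.norm_integral_le_integral_norm (block_le _ _)) hlen

lemma integral_norm_blockApprox_le {f : ℝ → E} (hf : IntegrableOn f (Icc 0 1)) {m : ℕ}
    (hm : 0 < m) : ∫ t in (0 : ℝ)..1, ‖blockApprox f m t‖ ≤ ∫ t in (0 : ℝ)..1, ‖f t‖ :=
  calc ∫ t in (0 : ℝ)..1, ‖blockApprox f m t‖
      ≤ ∫ t in (0 : ℝ)..1, blockApprox (fun s => ‖f s‖) m t :=
        intervalIntegral.integral_mono_on zero_le_one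
          (IntegrableOn.intervalIntegrable_of_Icc zero_le_one (integrableOn_blockApprox f m).norm)
          ((integrableOn_blockApprox _ m).intervalIntegrable_of_Icc zero_le_one)
          fun t _ => norm_blockApprox_le f m t
    _ = ∫ t in (0 : ℝ)..1, ‖f t‖ := integral_blockApprox hf.norm hm

lemma blockApprox_sub {f g : ℝ → E} (hf : IntegrableOn f (Icc 0 1)) (hg : IntegrableOn g (Icc 0 1))
    {m : ℕ} (hm : 0 < m) (t : ℝ) :
    blockApprox (f - g) m t = blockApprox f m t - blockApprox g m t := by
  have hi := uniformIndex_lt hm t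
  simp only [blockApprox, blockAverage, interval_average_eq, Pi.sub_apply,
    intervalIntegral.integral_sub (intervalIntegrable_block hf hi) (intervalIntegrable_block hg hi),
    smul_sub]

lemma dist_blockApprox_le [CompleteSpace E] {g : ℝ → E} (hg : Continuous g) {m : ℕ} (hm : 0 < m)
    {c : ℝ} (hgc : ∀ s t, dist s t ≤ 1 / m → dist (g s) (g t) ≤ c) {t : ℝ}
    (ht : t ∈ Icc (0 : ℝ) 1) :
    dist (blockApprox g m t) (g t) ≤ c := by
  obtain ⟨hlo, hhi⟩ := mem_Icc_uniformIndex hm ht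
  refine blockAverage_mem (convex_closedBall (g t) c) Metric.isClosed_closedBall hm
    hg.integrableOn_Ioc (ae_restrict_of_forall_mem measurableSet_Ioc fun s hs => hgc s t ?_)
  have hlen : ((uniformIndex m t + 1) / m - uniformIndex m t / m : ℝ) = 1 / m := by ring
  rw [Real.dist_eq, abs_le]
  constructor <;> linarith [hs.1, hs.2]

theorem exists_integral_norm_sub_blockApprox_lt [CompleteSpace E] {f : ℝ → E}
    (hf : IntegrableOn f (Icc 0 1)) {δ : ℝ} (hδ : 0 < δ) :
    ∃ m, 0 < m ∧ ∫ t in (0 : ℝ)..1, ‖f t - blockApprox f m t‖ < δ := by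
  have : (volume.restrict (Icc (0 : ℝ) 1)).Regular :=
    Measure.Regular.restrict_of_measure_ne_top (by simp)
  obtain ⟨g, hg_supp, hfg, hg_cont, hg_int⟩ :=
    hf.exists_hasCompactSupport_integral_sub_le (show 0 < δ / 4 by positivity)
  obtain ⟨η, hη, hgη⟩ := Metric.uniformContinuous_iff.1
    (hg_supp.uniformContinuous_of_continuous hg_cont) (δ / 4) (by positivity)
  obtain ⟨m, hmη⟩ := exists_nat_one_div_lt hη
  have hm : 0 < m + 1 := m.succ_pos
  refine ⟨m + 1, hm, ?_⟩
  have hii {u : ℝ → E} (hu : IntegrableOn u (Icc 0 1)) : IntervalIntegrable u volume 0 1 :=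
    hu.intervalIntegrable_of_Icc zero_le_one
  have hf_g : ∫ t in (0 : ℝ)..1, ‖f t - g t‖ ≤ δ / 4 := by
    rwa [intervalIntegral.integral_of_le zero_le_one, ← integral_Icc_eq_integral_Ioc]
  have hg_Ag : ∫ t in (0 : ℝ)..1, ‖g t - blockApprox g (m + 1) t‖ ≤ δ / 4 := by
    calc ∫ t in (0 : ℝ)..1, ‖g t - blockApprox g (m + 1) t‖ ≤ ∫ _ in (0 : ℝ)..1, δ / 4 :=
          intervalIntegral.integral_mono_on zero_le_one
            (hii (hg_int.sub (integrableOn_blockApprox g _))).norm intervalIntegrable_const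
            fun t ht => ?_
      _ = δ / 4 := by simp
    rw [← dist_eq_norm, dist_comm]
    refine dist_blockApprox_le hg_cont hm (fun s t hst => (hgη ?_).le) ht
    exact hst.trans_lt (by exact_mod_cast hmη)
  have hAg_Af : ∫ t in (0 : ℝ)..1, ‖blockApprox g (m + 1) t - blockApprox f (m + 1) t‖
      ≤ ∫ t in (0 : ℝ)..1, ‖f t - g t‖ := by
    simp only [← blockApprox_sub hg_int hf hm, norm_sub_rev (f _)]
    exact integral_norm_blockApprox_le (hg_int.sub hf) hm
  calc ∫ t in (0 : ℝ)..1, ‖f t - blockApprox f (m + 1) t‖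
      ≤ (∫ t in (0 : ℝ)..1, ‖f t - g t‖) + ∫ t in (0 : ℝ)..1, ‖g t - blockApprox f (m + 1) t‖ :=
        intervalIntegral_norm_sub_le zero_le_one (hii hf) (hii hg_int)
          (hii (integrableOn_blockApprox f _))
    _ ≤ (∫ t in (0 : ℝ)..1, ‖f t - g t‖) + ((∫ t in (0 : ℝ)..1, ‖g t - blockApprox g (m + 1) t‖)
          + ∫ t in (0 : ℝ)..1, ‖blockApprox g (m + 1) t - blockApprox f (m + 1) t‖) := by
        gcongr
        exact intervalIntegral_norm_sub_le zero_le_one (hii hg_int)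
          (hii (integrableOn_blockApprox g _)) (hii (integrableOn_blockApprox f _))
    _ < δ := by linarith

lemma integral_sq_norm_sub_add_sq_norm_sub_le {z ζ f g : ℝ → E}
    (hf : IntegrableOn f (Icc 0 1)) (hg : IntegrableOn g (Icc 0 1))
    (hz : ∀ t ∈ Icc (0 : ℝ) 1, z t = z 0 + ∫ s in (0 : ℝ)..t, f s)
    (hζ : ∀ t ∈ Icc (0 : ℝ) 1, ζ t = z 0 + ∫ s in (0 : ℝ)..t, g s)
    {K : ℝ} (hK : ∀ᵐ t ∂volume.restrict (Icc (0 : ℝ) 1), ‖f t - g t‖ ≤ K) :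
    ∫ t in (0 : ℝ)..1, (‖z t - ζ t‖ ^ 2 + ‖f t - g t‖ ^ 2)
      ≤ (∫ t in (0 : ℝ)..1, ‖f t - g t‖) ^ 2 + K * ∫ t in (0 : ℝ)..1, ‖f t - g t‖ := by
  set D := ∫ t in (0 : ℝ)..1, ‖f t - g t‖
  have hii {u : ℝ → E} (hu : IntegrableOn u (Icc 0 1)) {t : ℝ} (ht : t ∈ Icc (0 : ℝ) 1) :
      IntervalIntegrable u volume 0 t :=
    (hu.mono_set (Icc_subset_Icc le_rfl ht.2)).intervalIntegrable_of_Icc ht.1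
  have hfg : IntervalIntegrable (fun t => ‖f t - g t‖) volume 0 1 :=
    ((hii hf (right_mem_Icc.2 zero_le_one)).sub (hii hg (right_mem_Icc.2 zero_le_one))).norm
  have hzζ : ∀ t ∈ Icc (0 : ℝ) 1, ‖z t - ζ t‖ ≤ D := fun t ht =>
    calc ‖z t - ζ t‖ = ‖∫ s in (0 : ℝ)..t, (f s - g s)‖ := by
          rw [hz t ht, hζ t ht, add_sub_add_left_eq_sub,
            intervalIntegral.integral_sub (hii hf ht) (hii hg ht)]
      _ ≤ ∫ s in (0 : ℝ)..t, ‖f s - g s‖ := intervalIntegral.norm_integral_le_integral_norm ht.1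
      _ ≤ D := intervalIntegral.integral_mono_interval le_rfl ht.1 ht.2
          (ae_of_all _ fun _ => norm_nonneg _) hfg
  have hRHS : ∫ t in (0 : ℝ)..1, (D ^ 2 + K * ‖f t - g t‖) = D ^ 2 + K * D := by
    rw [intervalIntegral.integral_add intervalIntegrable_const (hfg.const_mul K),
      intervalIntegral.integral_const_mul, intervalIntegral.integral_const, sub_zero, one_smul]
  simp only [← hRHS, intervalIntegral.integral_of_le zero_le_one]
  -- Domination by an integrable function suffices; the left-hand side need not be integrable.
  refine integral_mono_of_nonneg (ae_of_all _ fun t => by positivity)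
    (intervalIntegrable_const.add (hfg.const_mul K)).1 ?_
  filter_upwards [ae_restrict_of_ae_restrict_of_subset Ioc_subset_Icc_self hK,
    ae_restrict_mem measurableSet_Ioc] with t hKt ht
  have hzt := hzζ t (Ioc_subset_Icc_self ht)
  nlinarith [norm_nonneg (z t - ζ t), norm_nonneg (f t - g t)]

/-- Lemma 3.1: a `W^{1,2}` curve with a.e. velocities in `conv{v_1,…,v_k}` can be approximated
in the `W^{1,2}` norm by a piecewise affine curve with the same endpoints and velocities in
`conv{v_1,…,v_k}`. -/
theorem stmt1 (n k : ℕ) (v : Fin k → EuclideanSpace ℝ (Fin (2*n)))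
    (z zdot : ℝ → EuclideanSpace ℝ (Fin (2*n)))
    (hint : IntegrableOn zdot (Set.Icc 0 1))
    (hz : ∀ t ∈ Set.Icc (0:ℝ) 1, z t = z 0 + ∫ s in (0:ℝ)..t, zdot s)
    (hconv : ∀ᵐ t ∂(volume.restrict (Set.Icc (0:ℝ) 1)),
      zdot t ∈ convexHull ℝ (Set.range v))
    (ε : ℝ) (hε : 0 < ε) :
    ∃ (ζ ζdot : ℝ → EuclideanSpace ℝ (Fin (2*n))) (m : ℕ) (τ : Fin (m+1) → ℝ)
      (wv : Fin m → EuclideanSpace ℝ (Fin (2*n))),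
      Monotone τ ∧ τ 0 = 0 ∧ τ (Fin.last m) = 1 ∧
      (∀ i : Fin m, ∀ t ∈ Set.Ioo (τ i.castSucc) (τ i.succ), ζdot t = wv i) ∧
      (∀ i : Fin m, wv i ∈ convexHull ℝ (Set.range v)) ∧
      (∀ t ∈ Set.Icc (0:ℝ) 1, ζ t = ζ 0 + ∫ s in (0:ℝ)..t, ζdot s) ∧
      ζ 0 = z 0 ∧ ζ 1 = z 1 ∧
      Real.sqrt (∫ t in (0:ℝ)..1, (‖z t - ζ t‖^2 + ‖zdot t - ζdot t‖^2)) < ε := by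
  set C := convexHull ℝ (range v)
  have hC : Convex ℝ C := convex_convexHull ℝ _
  have hCc : IsClosed C := (finite_range v).isClosed_convexHull ℝ
  obtain ⟨M, hM⟩ := ((finite_range v).isCompact_convexHull ℝ).isBounded.exists_norm_le
  obtain ⟨δ, hδ, hδε⟩ : ∃ δ > 0, ∀ D : ℝ, dist D 0 < δ → D ^ 2 + 2 * M * D < ε ^ 2 :=
    Metric.eventually_nhds_iff.1 <|
      ((continuous_pow 2).add (continuous_const_mul (2 * M))).continuousAt.eventually
        (gt_mem_nhds (by simpa using pow_pos hε 2))
  obtain ⟨m, hm, hD⟩ := exists_integral_norm_sub_blockApprox_lt hint hδ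
  set ζdot := blockApprox zdot m
  have hζdotC : ∀ t, ζdot t ∈ C := fun t =>
    blockAverage_mem_of_ae_mem hC hCc hint hconv (uniformIndex_lt hm t)
  refine ⟨fun t => z 0 + ∫ s in (0 : ℝ)..t, ζdot s, ζdot, m, fun j => (j : ℝ) / m,
    fun i => blockAverage zdot m i,
    fun a b hab => div_le_div_of_nonneg_right (Nat.cast_le.2 hab) m.cast_nonneg,
    by simp, by simp [hm.ne'], fun i t ht => ?_,
    fun i => blockAverage_mem_of_ae_mem hC hCc hint hconv i.isLt,
    fun t _ => by simp, by simp, ?_, ?_⟩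
  · exact blockApprox_eq_of_mem_Ioo zdot i.isLt
      (by simpa only [Fin.val_castSucc, Fin.val_succ, Nat.cast_add, Nat.cast_one] using ht)
  · show z 0 + ∫ s in (0 : ℝ)..1, blockApprox zdot m s = z 1
    rw [integral_blockApprox hint hm, ← hz 1 (right_mem_Icc.2 zero_le_one)]
  · have hK : ∀ᵐ t ∂volume.restrict (Icc (0 : ℝ) 1), ‖zdot t - ζdot t‖ ≤ 2 * M := by
      filter_upwards [hconv] with t ht
      linarith [norm_sub_le (zdot t) (ζdot t), hM _ ht, hM _ (hζdotC t)]
    have hD0 : 0 ≤ ∫ t in (0 : ℝ)..1, ‖zdot t - ζdot t‖ :=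
      intervalIntegral.integral_nonneg zero_le_one fun _ _ => norm_nonneg _
    rw [Real.sqrt_lt' hε]
    refine (integral_sq_norm_sub_add_sq_norm_sub_le hint (integrableOn_blockApprox zdot m) hz
      (fun t _ => rfl) hK).trans_lt (hδε _ ?_)
    rwa [Real.dist_eq, sub_zero, abs_of_nonneg hD0]
end

section
/- Let $(\alpha_i, w_i)_{i=1}^{p}$ and $(\beta_i, n_i)_{i=1}^{q}$ be sequences of nonnegative reals and vectors in $\mathbb{R}^{2n}$ satisfying: $\sum_{i=1}^p \alpha_i w_i = 0$, $\sum_{i=1}^q \beta_i n_i = 0$, $\sum_{1\le j<i\le p} \alpha_i\alpha_j\omega(w_i,w_j) = 1$, $\sum_{1\le j<i\le q}\beta_i\beta_j\omega(n_i,n_j) = 1$, with $w_p = n$ and $n_1 = -n$ for some unit vector $n$, and $\alpha_p, \beta_1 > 0$. Set $c = \sqrt{\beta_1^2 + \alpha_p^2}$ and define the concatenated sequence of coefficients $(\delta_i) = (\frac{\beta_1}{c}\alpha_1, \dots, \frac{\beta_1}{c}\alpha_{p-1}, \frac{\alpha_p}{c}\beta_2, \dots, \frac{\alpha_p}{c}\beta_q)$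 with corresponding vectors $(u_i) = (w_1,\dots,w_{p-1}, n_2,\dots,n_q)$. Then $\sum_i \delta_i u_i = 0$ and $\sum_{1 \le j < i \le p+q-2} \delta_i\delta_j\,\omega(u_i,u_j) = 1$. -/
open MeasureTheory Set
open scoped RealInnerProductSpace BigOperators

/-
Dropping the cutting normal from either admissible sequence does not change its ordered pairing
sum: because the weighted vectors add up to zero, the dropped term pairs the normal with a multiple
of itself, and `ω` is alternating. Splicing the two shortened sequences with weights `β₀ / c` and
`α_p / c` multiplies their sums by these squares and adds a cross term `ω(β₀ n, -α_p n) = 0`, so the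
result is `(β₀² + α_p²) / c² = 1`; the weighted vectors cancel for the same reason.
-/

open Finset

namespace Fin

variable {M : Type*} [AddCommMonoid M]

theorem sum_sum_lt_succ {n : ℕ} (f : Fin (n + 1) → Fin (n + 1) → M) :
    ∑ i, ∑ j ∈ univ.filter (· < i), f i j
      = ∑ i : Fin n, ∑ j ∈ univ.filter (· < i), f i.succ j.succ + ∑ i : Fin n, f i.succ 0 := by
  simp [sum_filter, Fin.sum_univ_succ, Fin.succ_pos, sum_add_distrib, add_comm]

theorem sum_sum_lt_castSucc {n : ℕ} (f : Fin (n + 1) → Fin (n + 1) → M) :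
    ∑ i, ∑ j ∈ univ.filter (· < i), f i j
      = ∑ i : Fin n, ∑ j ∈ univ.filter (· < i), f i.castSucc j.castSucc
        + ∑ j : Fin n, f (last n) j.castSucc := by
  simp [sum_filter, Fin.sum_univ_castSucc, Fin.castSucc_lt_last, not_lt.2 (le_last _)]

theorem sum_sum_lt_add {p q : ℕ} (f : Fin (p + q) → Fin (p + q) → M) :
    ∑ i, ∑ j ∈ univ.filter (· < i), f i j
      = ∑ i : Fin p, ∑ j ∈ univ.filter (· < i), f (castAdd q i) (castAdd q j)
        + ∑ i : Fin q, ∑ j : Fin p, f (natAdd p i) (castAdd q j)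
        + ∑ i : Fin q, ∑ j ∈ univ.filter (· < i), f (natAdd p i) (natAdd p j) := by
  have cross (i : Fin q) (j : Fin p) : castAdd q j < natAdd p i := by
    rw [lt_def, val_castAdd, val_natAdd]; omega
  simp [sum_filter, Fin.sum_univ_add, (strictMono_castAdd q).lt_iff_lt, cross, (cross _ _).not_gt,
    sum_add_distrib, add_assoc]

end Fin

namespace LinearMap.BilinForm

variable {R M : Type*} [CommRing R] [AddCommGroup M] [Module R M] (B : LinearMap.BilinForm R M)

def orderedPairSum {m : ℕ} (a : Fin m → R) (v : Fin m → M) : R :=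
  ∑ i, ∑ j ∈ univ.filter (· < i), a i * a j * B (v i) (v j)

variable {B}

theorem orderedPairSum_smul {m : ℕ} (s : R) (a : Fin m → R) (v : Fin m → M) :
    B.orderedPairSum (s • a) v = s ^ 2 * B.orderedPairSum a v := by
  simp only [orderedPairSum, mul_sum, Pi.smul_apply, smul_eq_mul]
  exact sum_congr rfl fun i _ => sum_congr rfl fun j _ => by ring

theorem orderedPairSum_append {p q : ℕ} (a : Fin p → R) (b : Fin q → R) (x : Fin p → M)
    (y : Fin q → M) :
    B.orderedPairSum (Fin.append a b) (Fin.append x y)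
      = B.orderedPairSum a x + B.orderedPairSum b y + B (∑ i, b i • y i) (∑ j, a j • x j) := by
  rw [orderedPairSum, Fin.sum_sum_lt_add, add_right_comm]
  simp only [Fin.append_left, Fin.append_right, map_sum, LinearMap.sum_apply, map_smul,
    LinearMap.smul_apply, smul_eq_mul, mul_sum]
  rw [sum_comm (f := fun j i => a j * (b i * _))]
  exact congrArg _ (sum_congr rfl fun i _ => sum_congr rfl fun j _ => by ring)

theorem orderedPairSum_succ {m : ℕ} (a : Fin (m + 1) → R) (v : Fin (m + 1) → M) :
    B.orderedPairSum a v
      = B.orderedPairSum (fun i : Fin m => a i.succ) (fun i => v i.succ)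
        + B (∑ i : Fin m, a i.succ • v i.succ) (a 0 • v 0) := by
  rw [orderedPairSum, Fin.sum_sum_lt_succ]
  simp only [map_sum, LinearMap.sum_apply, map_smul, LinearMap.smul_apply, smul_eq_mul, mul_sum]
  exact congrArg _ (sum_congr rfl fun i _ => by ring)

theorem orderedPairSum_castSucc {m : ℕ} (a : Fin (m + 1) → R) (v : Fin (m + 1) → M) :
    B.orderedPairSum a v
      = B.orderedPairSum (fun i : Fin m => a i.castSucc) (fun i => v i.castSucc)
        + B (a (Fin.last m) • v (Fin.last m)) (∑ j : Fin m, a j.castSucc • v j.castSucc) := by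
  rw [orderedPairSum, Fin.sum_sum_lt_castSucc]
  simp only [map_sum, map_smul, LinearMap.smul_apply, smul_eq_mul]
  exact congrArg _ (sum_congr rfl fun i _ => by ring)

theorem orderedPairSum_tail_of_sum_eq_zero (hB : B.IsAlt) {m : ℕ} {a : Fin (m + 1) → R}
    {v : Fin (m + 1) → M} (h : ∑ i, a i • v i = 0) :
    B.orderedPairSum (fun i => a i.succ) (fun i => v i.succ) = B.orderedPairSum a v := by
  rw [Fin.sum_univ_succ, add_eq_zero_iff_neg_eq'] at h
  rw [orderedPairSum_succ a v, ← h, map_neg, hB, neg_zero, add_zero]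

theorem orderedPairSum_init_of_sum_eq_zero (hB : B.IsAlt) {m : ℕ} {a : Fin (m + 1) → R}
    {v : Fin (m + 1) → M} (h : ∑ i, a i • v i = 0) :
    B.orderedPairSum (fun i => a i.castSucc) (fun i => v i.castSucc) = B.orderedPairSum a v := by
  rw [Fin.sum_univ_castSucc, add_eq_zero_iff_eq_neg] at h
  rw [orderedPairSum_castSucc a v, h, map_neg, hB, neg_zero, add_zero]

end LinearMap.BilinForm

section Symplectic

variable {n : ℕ}

noncomputable def stdJLinear : EuclideanSpace ℝ (Fin (2 * n)) →ₗ[ℝ] EuclideanSpace ℝ (Fin (2 * n)) where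
  toFun := stdJ
  map_add' x y := by
    ext i
    simp only [stdJ, PiLp.add_apply, PiLp.toLp_apply]
    split <;> ring
  map_smul' a x := by
    ext i
    simp only [stdJ, PiLp.smul_apply, smul_eq_mul, RingHom.id_apply, PiLp.toLp_apply]
    split <;> ring

noncomputable def omegaForm (n : ℕ) : LinearMap.BilinForm ℝ (EuclideanSpace ℝ (Fin (2 * n))) :=
  (innerₗ _).comp stdJLinear

theorem omegaForm_apply (u v : EuclideanSpace ℝ (Fin (2 * n))) : omegaForm n u v = omegaF u v :=
  rfl

theorem omegaForm_isAlt : (omegaForm n).IsAlt := fun x => by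
  rw [omegaForm_apply, omegaF, PiLp.inner_apply, ← (finCongr (two_mul n)).symm.sum_comp,
    Fin.sum_univ_add]
  -- the two halves of the coordinates contribute `-∑ xᵢ x_{i+n}` and `+∑ xᵢ x_{i+n}`
  simpa [stdJ, neg_add_eq_zero] using
    sum_congr rfl fun (i : Fin n) _ => mul_comm (x ⟨i, by omega⟩) (x ⟨i + n, by omega⟩)

end Symplectic

open LinearMap.BilinForm

theorem stmt14_general (n p q : ℕ)
    (w : Fin (p+1) → EuclideanSpace ℝ (Fin (2*n))) (α : Fin (p+1) → ℝ)
    (nv : Fin (q+1) → EuclideanSpace ℝ (Fin (2*n))) (β : Fin (q+1) → ℝ)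
    (hw0 : ∑ i, α i • w i = 0) (hn0 : ∑ i, β i • nv i = 0)
    (hwQ : ∑ i : Fin (p+1), ∑ j ∈ Finset.univ.filter (fun j => j < i),
      α i * α j * omegaF (w i) (w j) = 1)
    (hnQ : ∑ i : Fin (q+1), ∑ j ∈ Finset.univ.filter (fun j => j < i),
      β i * β j * omegaF (nv i) (nv j) = 1)
    (nn : EuclideanSpace ℝ (Fin (2*n)))
    (hwlast : w (Fin.last p) = nn) (hnfirst : nv 0 = -nn)
    (hαpos : 0 < α (Fin.last p))
    (c : ℝ) (hc : c = Real.sqrt ((β 0)^2 + (α (Fin.last p))^2))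
    (u : Fin (p + q) → EuclideanSpace ℝ (Fin (2*n))) (δ : Fin (p + q) → ℝ)
    (hu₁ : ∀ i : Fin p, u (Fin.castAdd q i) = w i.castSucc)
    (hu₂ : ∀ i : Fin q, u (Fin.natAdd p i) = nv i.succ)
    (hδ₁ : ∀ i : Fin p, δ (Fin.castAdd q i) = (β 0 / c) * α i.castSucc)
    (hδ₂ : ∀ i : Fin q, δ (Fin.natAdd p i) = (α (Fin.last p) / c) * β i.succ) :
    ∑ i, δ i • u i = 0 ∧
    ∑ i : Fin (p + q), ∑ j ∈ Finset.univ.filter (fun j => j < i),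
      δ i * δ j * omegaF (u i) (u j) = 1 := by
  have hc0 : c ≠ 0 := by
    rw [hc]; exact (Real.sqrt_pos.2 (add_pos_of_nonneg_of_pos (sq_nonneg _) (pow_pos hαpos 2))).ne'
  have hc2 : c ^ 2 = β 0 ^ 2 + α (Fin.last p) ^ 2 := by rw [hc, Real.sq_sqrt (by positivity)]
  have hu : u = Fin.append (fun i => w i.castSucc) (fun i => nv i.succ) :=
    funext <| Fin.addCases (by simpa using hu₁) (by simpa using hu₂)
  have hδ : δ = Fin.append ((β 0 / c) • fun i => α i.castSucc)
      ((α (Fin.last p) / c) • fun i => β i.succ) :=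
    funext <| Fin.addCases (by simpa using hδ₁) (by simpa using hδ₂)
  have hW : ∑ i : Fin p, α i.castSucc • w i.castSucc = -(α (Fin.last p) • nn) := by
    rwa [Fin.sum_univ_castSucc, hwlast, add_eq_zero_iff_eq_neg] at hw0
  have hN : ∑ i : Fin q, β i.succ • nv i.succ = β 0 • nn := by
    rwa [Fin.sum_univ_succ, hnfirst, smul_neg, neg_add_eq_zero, eq_comm] at hn0
  have hQw := (orderedPairSum_init_of_sum_eq_zero omegaForm_isAlt hw0).trans hwQ
  have hQn := (orderedPairSum_tail_of_sum_eq_zero omegaForm_isAlt hn0).trans hnQ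
  subst hu hδ
  refine ⟨?_, ?_⟩
  · simp only [Fin.sum_univ_add, Fin.append_left, Fin.append_right, Pi.smul_apply, smul_eq_mul,
      mul_smul, ← smul_sum, hW, hN, smul_neg]
    module
  · change (omegaForm n).orderedPairSum _ _ = 1
    rw [orderedPairSum_append, orderedPairSum_smul, orderedPairSum_smul, hQw, hQn]
    simp only [Pi.smul_apply, smul_eq_mul, mul_smul, ← smul_sum, hW, hN, map_smul, map_neg,
      LinearMap.smul_apply, omegaForm_isAlt nn]
    field_simp
    linarith

/-- The gluing construction in the proof of subadditivity: two admissible sequences, each using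
the cutting-hyperplane normal `nn` exactly at the designated position (last for the first
sequence, first for the second), are spliced into a sequence satisfying the admissibility
constraints `∑ δ_i u_i = 0` and `∑_{j<i} δ_i δ_j ω(u_i,u_j) = 1`. -/
theorem stmt14 (n p q : ℕ)
    (w : Fin (p+1) → EuclideanSpace ℝ (Fin (2*n))) (α : Fin (p+1) → ℝ)
    (nv : Fin (q+1) → EuclideanSpace ℝ (Fin (2*n))) (β : Fin (q+1) → ℝ)
    (hα : ∀ i, 0 ≤ α i) (hβ : ∀ i, 0 ≤ β i)
    (hw0 : ∑ i, α i • w i = 0) (hn0 : ∑ i, β i • nv i = 0)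
    (hwQ : ∑ i : Fin (p+1), ∑ j ∈ Finset.univ.filter (fun j => j < i),
      α i * α j * omegaF (w i) (w j) = 1)
    (hnQ : ∑ i : Fin (q+1), ∑ j ∈ Finset.univ.filter (fun j => j < i),
      β i * β j * omegaF (nv i) (nv j) = 1)
    (nn : EuclideanSpace ℝ (Fin (2*n))) (hnn : ‖nn‖ = 1)
    (hwlast : w (Fin.last p) = nn) (hnfirst : nv 0 = -nn)
    (hαpos : 0 < α (Fin.last p)) (hβpos : 0 < β 0)
    (c : ℝ) (hc : c = Real.sqrt ((β 0)^2 + (α (Fin.last p))^2))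
    (u : Fin (p + q) → EuclideanSpace ℝ (Fin (2*n))) (δ : Fin (p + q) → ℝ)
    (hu₁ : ∀ i : Fin p, u (Fin.castAdd q i) = w i.castSucc)
    (hu₂ : ∀ i : Fin q, u (Fin.natAdd p i) = nv i.succ)
    (hδ₁ : ∀ i : Fin p, δ (Fin.castAdd q i) = (β 0 / c) * α i.castSucc)
    (hδ₂ : ∀ i : Fin q, δ (Fin.natAdd p i) = (α (Fin.last p) / c) * β i.succ) :
    ∑ i, δ i • u i = 0 ∧
    ∑ i : Fin (p + q), ∑ j ∈ Finset.univ.filter (fun j => j < i),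
      δ i * δ j * omegaF (u i) (u j) = 1 :=
  stmt14_general n p q w α nv β hw0 hn0 hwQ hnQ nn hwlast hnfirst hαpos c hc u δ hu₁ hu₂ hδ₁ hδ₂
end
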